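/- arXiv:1005.2260 — 11 statements merged into one kernel-verified Lean document; each statement's English description precedes it below -/
import Mathlib

section
/- Let a > 0 be a real number and let k, d be nonnegative integers with d² + d ≤ 2k ≤ d² + 3d. Then (a,a)_{k+1} = d·a. (This computes the k-th ECH capacity of the ball B(a): c_k(B(a)) = d·a.) -/
/-! For `a > 0` the pairs with `a*m + a*n ≤ L` form a triangle `m + n < N`, which has
`N(N+1)/2` lattice points; so the count first exceeds `k` at the level `d·a` with
`d(d+1)/2 ≤ k < (d+1)(d+2)/2`. -/

/-- `(a,b)_k`: the `k`-th smallest element, counted with multiplicity, of the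
array `(a*m + b*n)_{(m,n) ∈ ℕ×ℕ}`; precisely, the infimum of all `L : ℝ` such
that the set `{(m,n) : a*m + b*n ≤ L}` has at least `k` elements. -/
noncomputable def echSeq (a b : ℝ) (k : ℕ) : ℝ :=
  sInf {L : ℝ | k ≤ {p : ℕ × ℕ | a * p.1 + b * p.2 ≤ L}.ncard}

open Finset

theorem echSeq_eq_of_le_ncard {a b x : ℝ} {k : ℕ}
    (hx : k ≤ {p : ℕ × ℕ | a * p.1 + b * p.2 ≤ x}.ncard)
    (hlt : ∀ L < x, {p : ℕ × ℕ | a * p.1 + b * p.2 ≤ L}.ncard < k) :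
    echSeq a b k = x :=
  IsLeast.csInf_eq ⟨hx, fun _ hL => not_lt.1 fun h => (hlt _ h).not_ge hL⟩

theorem coe_biUnion_range_antidiagonal (N : ℕ) :
    ((range N).biUnion antidiagonal : Set (ℕ × ℕ)) = {p : ℕ × ℕ | p.1 + p.2 < N} := by
  ext p
  simp

theorem finite_setOf_add_lt (N : ℕ) : {p : ℕ × ℕ | p.1 + p.2 < N}.Finite := by
  rw [← coe_biUnion_range_antidiagonal]
  exact Finset.finite_toSet _

theorem ncard_setOf_add_lt_mul_two (N : ℕ) :
    {p : ℕ × ℕ | p.1 + p.2 < N}.ncard * 2 = N * (N + 1) := by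
  rw [← coe_biUnion_range_antidiagonal, Set.ncard_coe_finset,
    card_biUnion fun i _ j _ hij => disjoint_left.2 fun p hi hj =>
      hij ((mem_antidiagonal.1 hi).symm.trans (mem_antidiagonal.1 hj))]
  simp only [Nat.card_antidiagonal]
  rw [← add_zero (∑ i ∈ range N, (i + 1)), ← sum_range_succ' (fun i => i), sum_range_id_mul_two,
    Nat.add_sub_cancel, mul_comm]

section Diagonal

variable {a : ℝ} (ha : 0 < a)
include ha

theorem setOf_le_natCast_mul_eq (N : ℕ) :
    {p : ℕ × ℕ | a * p.1 + a * p.2 ≤ N * a} = {p : ℕ × ℕ | p.1 + p.2 < N + 1} := by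
  ext ⟨m, n⟩
  have : a * m + a * n = ((m + n : ℕ) : ℝ) * a := by push_cast; ring
  rw [Set.mem_ofPred_eq, Set.mem_ofPred_eq, this, mul_le_mul_iff_left₀ ha, Nat.cast_le,
    Nat.lt_succ_iff]

theorem setOf_le_subset_of_lt_natCast_mul {L : ℝ} {N : ℕ} (hL : L < N * a) :
    {p : ℕ × ℕ | a * p.1 + a * p.2 ≤ L} ⊆ {p : ℕ × ℕ | p.1 + p.2 < N} := by
  intro p hp
  have : ((p.1 + p.2 : ℕ) : ℝ) * a < N * a := by push_cast; linarith [hp.out]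
  exact_mod_cast lt_of_mul_lt_mul_right this ha.le

end Diagonal

/-- The ECH capacities of a ball: `c_k(B(a)) = (a,a)_{k+1} = d·a` where
`d² + d ≤ 2k ≤ d² + 3d`. -/
theorem ech_capacity_ball (a : ℝ) (ha : 0 < a) (k d : ℕ)
    (h1 : d ^ 2 + d ≤ 2 * k) (h2 : 2 * k ≤ d ^ 2 + 3 * d) :
    echSeq a a (k + 1) = d * a := by
  apply echSeq_eq_of_le_ncard
  · have hcard := ncard_setOf_add_lt_mul_two (d + 1)
    rw [setOf_le_natCast_mul_eq ha]
    nlinarith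
  · intro L hL
    have hcard := ncard_setOf_add_lt_mul_two d
    have hle := Set.ncard_le_ncard (setOf_le_subset_of_lt_natCast_mul ha hL)
      (finite_setOf_add_lt d)
    nlinarith
end

section
/- Let a ≥ b > 0 be real numbers. Then (a,b)_6 = 5b if a ≥ 5b; (a,b)_6 = a if 4b ≤ a ≤ 5b; (a,b)_6 = 4b if 3b ≤ a ≤ 4b; (a,b)_6 = a + b if 2b ≤ a ≤ 3b; (a,b)_6 = 3b if (3/2)b ≤ a ≤ 2b; and (a,b)_6 = 2a if b ≤ a ≤ (3/2)b. -/
open Finset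

section

variable {a b : ℝ}

theorem finite_setOf_mul_add_mul_le (ha : 0 < a) (hb : 0 < b) (L : ℝ) :
    {p : ℕ × ℕ | a * p.1 + b * p.2 ≤ L}.Finite := by
  refine (Set.finite_Iic (⌊L / a⌋₊, ⌊L / b⌋₊)).subset fun ⟨m, n⟩ h => ?_
  simp only [Set.mem_ofPred_eq] at h
  have hm : a * m ≤ L := by nlinarith [n.cast_nonneg (α := ℝ)]
  have hn : b * n ≤ L := by nlinarith [m.cast_nonneg (α := ℝ)]
  exact ⟨Nat.le_floor ((le_div_iff₀' ha).2 hm), Nat.le_floor ((le_div_iff₀' hb).2 hn)⟩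

theorem echSeq_eq_of_ncard (ha : 0 < a) (hb : 0 < b) {k : ℕ} {L : ℝ}
    (hle : k ≤ {p : ℕ × ℕ | a * p.1 + b * p.2 ≤ L}.ncard)
    (hlt : {p : ℕ × ℕ | a * p.1 + b * p.2 < L}.ncard < k) : echSeq a b k = L := by
  refine IsLeast.csInf_eq ⟨hle, fun L' hL' => not_lt.1 fun hL'L => ?_⟩
  have hsub : {p : ℕ × ℕ | a * p.1 + b * p.2 ≤ L'} ⊆ {p | a * p.1 + b * p.2 < L} :=
    fun p hp => lt_of_le_of_lt hp hL'L
  have hfin := (finite_setOf_mul_add_mul_le ha hb L).subset fun p (hp : _ < L) => hp.le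
  exact (hL'.trans (Set.ncard_le_ncard hsub hfin)).not_gt hlt

theorem echSeq_eq_of_finset (ha : 0 < a) (hb : 0 < b) {k : ℕ} {L : ℝ} (F G : Finset (ℕ × ℕ))
    (hF : k ≤ #F) (hG : #G < k) (hFL : ∀ p ∈ F, a * p.1 + b * p.2 ≤ L)
    (hGL : ∀ p : ℕ × ℕ, a * p.1 + b * p.2 < L → p ∈ G) : echSeq a b k = L := by
  refine echSeq_eq_of_ncard ha hb ?_ ?_
  · calc k ≤ #F := hF
      _ = (F : Set (ℕ × ℕ)).ncard := (Set.ncard_coe_finset F).symm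
      _ ≤ _ := Set.ncard_le_ncard hFL (finite_setOf_mul_add_mul_le ha hb L)
  · calc _ ≤ (G : Set (ℕ × ℕ)).ncard := Set.ncard_le_ncard hGL G.finite_toSet
      _ = #G := Set.ncard_coe_finset G
      _ < k := hG

theorem add_lt_of_mul_add_mul_lt (hb : 0 < b) (hab : b ≤ a) {m n N : ℕ}
    (h : a * m + b * n < N * b) : m + n < N := by
  have : ((m + n : ℕ) : ℝ) * b < N * b := by
    push_cast
    nlinarith [m.cast_nonneg (α := ℝ)]
  exact_mod_cast lt_of_mul_lt_mul_right this hb.le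

theorem echSeq_six_eq (hb : 0 < b) (hab : b ≤ a) {L : ℝ} (hL : L ≤ 5 * b)
    (F G : Finset (ℕ × ℕ)) (hF : #F = 6) (hG : #G = 5) (hFL : ∀ p ∈ F, a * p.1 + b * p.2 ≤ L)
    (hGL : ∀ m : ℕ, m < 5 → ∀ n : ℕ, n < 5 - m → a * m + b * n < L → (m, n) ∈ G) :
    echSeq a b 6 = L :=
  echSeq_eq_of_finset (hb.trans_le hab) hb F G hF.ge (by omega) hFL fun p hp =>
    have hmn : p.1 + p.2 < 5 := add_lt_of_mul_add_mul_lt hb hab (by push_cast; linarith)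
    hGL p.1 (by omega) p.2 (by omega) hp

theorem echSeq_six_of_five_mul_le (hb : 0 < b) (h : 5 * b ≤ a) : echSeq a b 6 = 5 * b :=
  echSeq_six_eq hb (by linarith) le_rfl
    {(0, 0), (0, 1), (0, 2), (0, 3), (0, 4), (0, 5)} {(0, 0), (0, 1), (0, 2), (0, 3), (0, 4)}
    rfl rfl (by intro p hp; fin_cases hp <;> norm_num <;> linarith) (by
      intro m hm n hn hlt
      interval_cases m <;> interval_cases n <;> first | decide | (push_cast at hlt; linarith))

theorem echSeq_six_of_four_mul_le_of_le_five_mul (hb : 0 < b) (h₁ : 4 * b ≤ a)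
    (h₂ : a ≤ 5 * b) : echSeq a b 6 = a :=
  echSeq_six_eq hb (by linarith) h₂
    {(0, 0), (0, 1), (0, 2), (0, 3), (0, 4), (1, 0)} {(0, 0), (0, 1), (0, 2), (0, 3), (0, 4)}
    rfl rfl (by intro p hp; fin_cases hp <;> norm_num <;> linarith) (by
      intro m hm n hn hlt
      interval_cases m <;> interval_cases n <;> first | decide | (push_cast at hlt; linarith))

theorem echSeq_six_of_three_mul_le_of_le_four_mul (hb : 0 < b) (h₁ : 3 * b ≤ a)
    (h₂ : a ≤ 4 * b) : echSeq a b 6 = 4 * b :=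
  echSeq_six_eq hb (by linarith) (by linarith)
    {(0, 0), (0, 1), (0, 2), (0, 3), (0, 4), (1, 0)} {(0, 0), (0, 1), (0, 2), (0, 3), (1, 0)}
    rfl rfl (by intro p hp; fin_cases hp <;> norm_num <;> linarith) (by
      intro m hm n hn hlt
      interval_cases m <;> interval_cases n <;> first | decide | (push_cast at hlt; linarith))

theorem echSeq_six_of_two_mul_le_of_le_three_mul (hb : 0 < b) (h₁ : 2 * b ≤ a)
    (h₂ : a ≤ 3 * b) : echSeq a b 6 = a + b :=
  echSeq_six_eq hb (by linarith) (by linarith)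
    {(0, 0), (0, 1), (0, 2), (0, 3), (1, 0), (1, 1)} {(0, 0), (0, 1), (0, 2), (0, 3), (1, 0)}
    rfl rfl (by intro p hp; fin_cases hp <;> norm_num <;> linarith) (by
      intro m hm n hn hlt
      interval_cases m <;> interval_cases n <;> first | decide | (push_cast at hlt; linarith))

theorem echSeq_six_of_three_halves_mul_le_of_le_two_mul (hb : 0 < b) (h₁ : 3 / 2 * b ≤ a)
    (h₂ : a ≤ 2 * b) : echSeq a b 6 = 3 * b :=
  echSeq_six_eq hb (by linarith) (by linarith)
    {(0, 0), (0, 1), (0, 2), (0, 3), (1, 0), (1, 1)} {(0, 0), (0, 1), (0, 2), (1, 0), (1, 1)}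
    rfl rfl (by intro p hp; fin_cases hp <;> norm_num <;> linarith) (by
      intro m hm n hn hlt
      interval_cases m <;> interval_cases n <;> first | decide | (push_cast at hlt; linarith))

theorem echSeq_six_of_le_three_halves_mul (hb : 0 < b) (hab : b ≤ a) (h : a ≤ 3 / 2 * b) :
    echSeq a b 6 = 2 * a :=
  echSeq_six_eq hb hab (by linarith)
    {(0, 0), (0, 1), (0, 2), (1, 0), (1, 1), (2, 0)} {(0, 0), (0, 1), (0, 2), (1, 0), (1, 1)}
    rfl rfl (by intro p hp; fin_cases hp <;> norm_num <;> linarith) (by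
      intro m hm n hn hlt
      interval_cases m <;> interval_cases n <;> first | decide | (push_cast at hlt; linarith))

end

/-- Computation of `(a,b)_6` for `a ≥ b > 0`. -/
theorem echSeq_six (a b : ℝ) (hb : 0 < b) (hab : b ≤ a) :
    (5 * b ≤ a → echSeq a b 6 = 5 * b) ∧
    (4 * b ≤ a → a ≤ 5 * b → echSeq a b 6 = a) ∧
    (3 * b ≤ a → a ≤ 4 * b → echSeq a b 6 = 4 * b) ∧
    (2 * b ≤ a → a ≤ 3 * b → echSeq a b 6 = a + b) ∧
    ((3 / 2) * b ≤ a → a ≤ 2 * b → echSeq a b 6 = 3 * b) ∧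
    (a ≤ (3 / 2) * b → echSeq a b 6 = 2 * a) :=
  ⟨echSeq_six_of_five_mul_le hb,
    echSeq_six_of_four_mul_le_of_le_five_mul hb,
    echSeq_six_of_three_mul_le_of_le_four_mul hb,
    echSeq_six_of_two_mul_le_of_le_three_mul hb,
    echSeq_six_of_three_halves_mul_le_of_le_two_mul hb,
    echSeq_six_of_le_three_halves_mul hb hab⟩
end

section
/- Let a, b > 0 be real numbers. Then lim_{k→∞} ((a,b)_k)² / k = 2ab. (This says that the asymptotics of the ECH capacities of the ellipsoid E(a,b) recover its symplectic volume ab/2, i.e. lim_{k→∞} c_k(E(a,b))²/k = 4·vol(E(a,b)).) -/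
/-!
Let `N(L)` count the points `(m, n) ∈ ℕ²` with `a m + b n ≤ L`. Summing over the columns `m`
and comparing each column with `(L - a m) / b` gives `L² / 2ab ≤ N(L) ≤ (L + a + b)² / 2ab`.
Since `(a,b)_k` is the least `L` with `N(L) ≥ k`, this inverts to
`√(2abk) - (a + b) ≤ (a,b)_k ≤ √(2abk)`, and a bounded error against `√(2abk)` disappears
after dividing by `√k`.
-/

open Filter

open Finset

section FloorDiv

variable {a x : ℝ}

theorem lt_floor_div_add_one_iff (ha : 0 < a) (hx : 0 ≤ x) (m : ℕ) :
    m < ⌊x / a⌋₊ + 1 ↔ a * m ≤ x := by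
  rw [Nat.lt_add_one_iff, Nat.le_floor_iff (div_nonneg hx ha.le), le_div_iff₀ ha, mul_comm]

theorem mul_floor_div_le (ha : 0 < a) (hx : 0 ≤ x) : a * ⌊x / a⌋₊ ≤ x :=
  (lt_floor_div_add_one_iff ha hx _).1 (Nat.lt_succ_self _)

theorem lt_mul_floor_div_add_one (ha : 0 < a) (hx : 0 ≤ x) : x < a * (⌊x / a⌋₊ + 1) := by
  have hnext := (lt_floor_div_add_one_iff ha hx (⌊x / a⌋₊ + 1)).not.1 (lt_irrefl _)
  push_cast at hnext
  linarith

end FloorDiv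

theorem sum_range_sub_mul (L a : ℝ) (M : ℕ) :
    ∑ m ∈ range (M + 1), (L - a * m) = (M + 1) * (2 * L - a * M) / 2 := by
  induction M with
  | zero => simp
  | succ M ih => rw [sum_range_succ, ih]; push_cast; ring

section TriangleSum

variable {a L : ℝ}

theorem sq_div_le_sum_range_floor (ha : 0 < a) (hL : 0 ≤ L) :
    L ^ 2 / (2 * a) ≤ ∑ m ∈ range (⌊L / a⌋₊ + 1), (L - a * m) := by
  have hM := mul_floor_div_le ha hL
  have hM' := lt_mul_floor_div_add_one ha hL
  rw [sum_range_sub_mul, div_le_div_iff₀ (by positivity) two_pos]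
  nlinarith

theorem sum_range_floor_le_sq_div (ha : 0 < a) (hL : 0 ≤ L) :
    ∑ m ∈ range (⌊L / a⌋₊ + 1), (L - a * m) ≤ (L + a) ^ 2 / (2 * a) := by
  have hM := mul_floor_div_le ha hL
  rw [sum_range_sub_mul, div_le_div_iff₀ two_pos (by positivity)]
  nlinarith [sq_nonneg (2 * a * ⌊L / a⌋₊ - 2 * L + a)]

end TriangleSum

noncomputable def latticePointCount (a b L : ℝ) : ℕ :=
  {p : ℕ × ℕ | a * p.1 + b * p.2 ≤ L}.ncard

section LatticePointCount

variable {a b L : ℝ}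

theorem latticePointCount_eq_sum (ha : 0 < a) (hb : 0 < b) (hL : 0 ≤ L) :
    latticePointCount a b L = ∑ m ∈ range (⌊L / a⌋₊ + 1), (⌊(L - a * m) / b⌋₊ + 1) := by
  have hset : {p : ℕ × ℕ | a * p.1 + b * p.2 ≤ L} = Equiv.sigmaEquivProd ℕ ℕ ''
      ↑((range (⌊L / a⌋₊ + 1)).sigma fun m => range (⌊(L - a * m) / b⌋₊ + 1)) := by
    ext ⟨m, n⟩
    simp only [Equiv.image_eq_preimage_symm, Set.mem_preimage, Set.mem_ofPred_eq, coe_sigma,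
      Set.mem_sigma_iff, Equiv.sigmaEquivProd_symm_apply, mem_coe, mem_range]
    constructor
    · intro h
      have ham : a * m ≤ L := by nlinarith [Nat.cast_nonneg (α := ℝ) n]
      exact ⟨(lt_floor_div_add_one_iff ha hL m).2 ham,
        (lt_floor_div_add_one_iff hb (sub_nonneg.2 ham) n).2 (by linarith)⟩
    · rintro ⟨hm, hn⟩
      have ham := (lt_floor_div_add_one_iff ha hL m).1 hm
      have hbn := (lt_floor_div_add_one_iff hb (sub_nonneg.2 ham) n).1 hn
      linarith
  rw [latticePointCount, hset, Set.ncard_image_of_injective _ (Equiv.injective _),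
    Set.ncard_coe_finset, card_sigma]
  simp

theorem sq_div_le_latticePointCount (ha : 0 < a) (hb : 0 < b) (hL : 0 ≤ L) :
    L ^ 2 / (2 * a * b) ≤ latticePointCount a b L := by
  rw [latticePointCount_eq_sum ha hb hL]
  push_cast
  calc L ^ 2 / (2 * a * b) = L ^ 2 / (2 * a) / b := by rw [div_div]
    _ ≤ (∑ m ∈ range (⌊L / a⌋₊ + 1), (L - a * m)) / b := by
      gcongr; exact sq_div_le_sum_range_floor ha hL
    _ = ∑ m ∈ range (⌊L / a⌋₊ + 1), (L - a * m) / b := sum_div ..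
    _ ≤ _ := sum_le_sum fun m _ => (Nat.lt_floor_add_one _).le

theorem latticePointCount_le (ha : 0 < a) (hb : 0 < b) (hL : 0 ≤ L) :
    (latticePointCount a b L : ℝ) ≤ (L + a + b) ^ 2 / (2 * a * b) := by
  rw [latticePointCount_eq_sum ha hb hL]
  push_cast
  have hterm : ∀ m ∈ range (⌊L / a⌋₊ + 1), (⌊(L - a * m) / b⌋₊ : ℝ) + 1 ≤ (L - a * m) / b + 1 :=
    fun m hm => by
      have ham := (lt_floor_div_add_one_iff ha hL m).1 (mem_range.1 hm)
      gcongr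
      exact Nat.floor_le (div_nonneg (sub_nonneg.2 ham) hb.le)
  calc _ ≤ ∑ m ∈ range (⌊L / a⌋₊ + 1), ((L - a * m) / b + 1) := sum_le_sum hterm
    _ = (∑ m ∈ range (⌊L / a⌋₊ + 1), (L - a * m)) / b + (⌊L / a⌋₊ + 1) := by
      rw [sum_add_distrib, sum_div]; simp
    _ ≤ (L + a) ^ 2 / (2 * a) / b + (L + a) / a := by
      gcongr
      · exact sum_range_floor_le_sq_div ha hL
      · rw [le_div_iff₀ ha]; linarith [mul_floor_div_le ha hL]
    _ = ((L + a + b) ^ 2 - b ^ 2) / (2 * a * b) := by field_simp; ring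
    _ ≤ (L + a + b) ^ 2 / (2 * a * b) := by gcongr; linarith [sq_nonneg b]

theorem nonneg_of_le_latticePointCount (ha : 0 ≤ a) (hb : 0 ≤ b) {k : ℕ} (hk : 0 < k)
    (h : k ≤ latticePointCount a b L) : 0 ≤ L := by
  by_contra! hL
  have hempty : {p : ℕ × ℕ | a * p.1 + b * p.2 ≤ L} = ∅ :=
    Set.eq_empty_of_forall_notMem fun p hp =>
      (hL.trans_le (by positivity : (0 : ℝ) ≤ a * p.1 + b * p.2)).not_ge hp
  rw [latticePointCount, hempty, Set.ncard_empty] at h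
  omega

end LatticePointCount

theorem tendsto_sq_div_of_abs_sub_sqrt_le {f : ℕ → ℝ} {C D : ℝ} (hC : 0 ≤ C)
    (hf : ∀ᶠ k in atTop, |f k - √(C * k)| ≤ D) :
    Tendsto (fun k => f k ^ 2 / k) atTop (nhds C) := by
  have hsqrt : Tendsto (fun k : ℕ => √(k : ℝ)) atTop atTop :=
    Real.tendsto_sqrt_atTop.comp tendsto_natCast_atTop_atTop
  have herr : Tendsto (fun k : ℕ => (f k - √(C * k)) / √k) atTop (nhds 0) := by
    refine squeeze_zero_norm' ?_ (tendsto_const_nhds (x := D).div_atTop hsqrt)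
    filter_upwards [hf] with k hk
    rw [norm_div, Real.norm_eq_abs, Real.norm_of_nonneg (Real.sqrt_nonneg _)]
    exact div_le_div_of_nonneg_right hk (Real.sqrt_nonneg _)
  have hlim := ((tendsto_const_nhds (x := √C)).add herr).pow 2
  rw [add_zero, Real.sq_sqrt hC] at hlim
  refine hlim.congr' ?_
  filter_upwards [eventually_gt_atTop 0] with k hk
  have hk' : (0 : ℝ) < k := Nat.cast_pos.2 hk
  rw [Real.sqrt_mul hC, sub_div, mul_div_cancel_right₀ _ (Real.sqrt_pos.2 hk').ne',
    add_sub_cancel, div_pow, Real.sq_sqrt hk'.le]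

section EchSeq

variable {a b : ℝ}

theorem le_latticePointCount_sqrt (ha : 0 < a) (hb : 0 < b) (k : ℕ) :
    k ≤ latticePointCount a b √(2 * a * b * k) := by
  have h := sq_div_le_latticePointCount ha hb (Real.sqrt_nonneg (2 * a * b * k))
  rw [Real.sq_sqrt (by positivity), mul_div_cancel_left₀ _ (by positivity)] at h
  exact_mod_cast h

theorem echSeq_le_sqrt (ha : 0 < a) (hb : 0 < b) {k : ℕ} (hk : 0 < k) :
    echSeq a b k ≤ √(2 * a * b * k) :=
  csInf_le ⟨0, fun _ hL => nonneg_of_le_latticePointCount ha.le hb.le hk hL⟩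
    (le_latticePointCount_sqrt ha hb k)

theorem sqrt_sub_le_echSeq (ha : 0 < a) (hb : 0 < b) {k : ℕ} (hk : 0 < k) :
    √(2 * a * b * k) - (a + b) ≤ echSeq a b k := by
  refine le_csInf ⟨_, le_latticePointCount_sqrt ha hb k⟩ fun L (hL : k ≤ _) => ?_
  have hL0 := nonneg_of_le_latticePointCount ha.le hb.le hk hL
  have hcount : 2 * a * b * k ≤ (L + a + b) ^ 2 := by
    rw [← le_div_iff₀' (by positivity)]
    exact (Nat.cast_le.2 hL).trans (latticePointCount_le ha hb hL0)
  have hsqrt := Real.sqrt_le_sqrt hcount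
  rw [Real.sqrt_sq (by positivity)] at hsqrt
  linarith

end EchSeq

/-- The asymptotics of the ECH capacities of the ellipsoid `E(a,b)` recover its
symplectic volume: `lim_{k→∞} (a,b)_k² / k = 2ab`. -/
theorem echSeq_sq_div_tendsto (a b : ℝ) (ha : 0 < a) (hb : 0 < b) :
    Tendsto (fun k : ℕ => (echSeq a b k) ^ 2 / k) atTop (nhds (2 * a * b)) := by
  refine tendsto_sq_div_of_abs_sub_sqrt_le (D := a + b) (by positivity) ?_
  filter_upwards [eventually_gt_atTop 0] with k hk
  rw [abs_sub_le_iff]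
  constructor
  · linarith [echSeq_le_sqrt ha hb hk, add_pos ha hb]
  · linarith [sqrt_sub_le_echSeq ha hb hk]
end

section
/- For every nonnegative integer k, min { m + n | (m,n) ∈ ℕ×ℕ, (m+1)(n+1) ≥ k+1 } = (1,2)_{k+1}. (This says that the polydisk P(1,1) and the ellipsoid E(1,2) have the same ECH capacities, namely 0,1,2,2,3,3,4,4,4,5,5,5,…) -/
/-!
Both sides equal the least `d` with `k + 1 ≤ ⌊(d + 2)² / 4⌋`. By AM-GM, `⌊(d + 2)² / 4⌋` is the
largest product `(m + 1)(n + 1)` with `m + n = d`, attained at the balanced split. It is also the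
number of lattice points `(m, n)` with `m + 2n ≤ d`: the rows `n = d/2 - i` have `d % 2 + 2i + 1`
points each. Since that lattice count only jumps at integers, `(1,2)_{k+1}` is the same least `d`.
-/

open Finset

lemma Nat.sInf_le_iff_of_monotone {f : ℕ → ℕ} (hf : Monotone f) {k : ℕ} (hk : ∃ d, k ≤ f d)
    (n : ℕ) : sInf {d | k ≤ f d} ≤ n ↔ k ≤ f n :=
  ⟨fun h => le_trans (Nat.sInf_mem (s := {d | k ≤ f d}) hk) (hf h), fun h => Nat.sInf_le h⟩

namespace PolydiskEllipsoid

def quarterSquare (d : ℕ) : ℕ := (d + 2) ^ 2 / 4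

lemma quarterSquare_mono : Monotone quarterSquare := fun _ _ h =>
  Nat.div_le_div_right (Nat.pow_le_pow_left (by omega) 2)

lemma quarterSquare_eq (d : ℕ) : quarterSquare d = (d / 2 + 1) * ((d + 1) / 2 + 1) := by
  rcases Nat.even_or_odd' d with ⟨q, rfl | rfl⟩
  · have h : (2 * q + 2) ^ 2 = (q + 1) * (q + 1) * 4 := by ring
    rw [quarterSquare, h, Nat.mul_div_cancel _ (by norm_num)]
    congr 2 <;> omega
  · have h : (2 * q + 1 + 2) ^ 2 = 4 * ((q + 1) * (q + 2)) + 1 := by ring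
    rw [quarterSquare, h, Nat.mul_add_div (by norm_num)]
    have h1 : (2 * q + 1) / 2 = q := by omega
    have h2 : (2 * q + 1 + 1) / 2 = q + 1 := by omega
    rw [h1, h2, Nat.div_eq_of_lt (by norm_num : 1 < 4)]
    ring

lemma succ_mul_succ_le_quarterSquare (m n : ℕ) : (m + 1) * (n + 1) ≤ quarterSquare (m + n) := by
  refine (Nat.le_div_iff_mul_le (by norm_num)).2 ?_
  have h : ((m : ℤ) + 1) * (n + 1) * 4 ≤ ((m : ℤ) + n + 2) ^ 2 := by
    nlinarith [sq_nonneg ((m : ℤ) - n)]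
  exact_mod_cast h

lemma exists_add_eq_and_succ_mul_succ_eq (d : ℕ) :
    ∃ m n : ℕ, m + n = d ∧ (m + 1) * (n + 1) = quarterSquare d :=
  ⟨d / 2, (d + 1) / 2, by omega, (quarterSquare_eq d).symm⟩

lemma setOf_exists_add_eq_and_le_succ_mul_succ (k : ℕ) :
    {s : ℕ | ∃ m n : ℕ, s = m + n ∧ k ≤ (m + 1) * (n + 1)} = {d | k ≤ quarterSquare d} := by
  ext d
  constructor
  · rintro ⟨m, n, rfl, hk⟩
    exact hk.trans (succ_mul_succ_le_quarterSquare m n)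
  · intro hk
    obtain ⟨m, n, hd, hmn⟩ := exists_add_eq_and_succ_mul_succ_eq d
    exact ⟨m, n, hd.symm, hmn ▸ hk⟩

lemma sum_range_add_two_mul_add_one (r q : ℕ) :
    ∑ i ∈ range (q + 1), (r + 2 * i + 1) = (q + 1) * (q + r + 1) := by
  induction q with
  | zero => simp
  | succ n ih => rw [sum_range_succ, ih]; ring

/-- `{(m, n) | m + 2 n ≤ d}` as a union of rows, indexed from the top so that the row lengths
involve no truncated subtraction. -/
def triangle (d : ℕ) : Finset (ℕ × ℕ) :=
  (range (d / 2 + 1)).biUnion fun i => (range (d % 2 + 2 * i + 1)).image fun s => (s, d / 2 - i)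

lemma coe_triangle (d : ℕ) : (triangle d : Set (ℕ × ℕ)) = {p : ℕ × ℕ | p.1 + 2 * p.2 ≤ d} := by
  ext ⟨m, n⟩
  simp only [triangle, coe_biUnion, mem_coe, mem_range, Set.mem_iUnion, mem_image,
    Prod.mk.injEq, Set.mem_ofPred_eq]
  constructor
  · rintro ⟨i, hi, s, hs, rfl, rfl⟩
    omega
  · intro h
    exact ⟨d / 2 - n, by omega, m, by omega, rfl, by omega⟩

lemma card_triangle (d : ℕ) : (triangle d).card = quarterSquare d := by
  have hrows : ∀ i ∈ range (d / 2 + 1),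
      ((range (d % 2 + 2 * i + 1)).image fun s => (s, d / 2 - i)).card = d % 2 + 2 * i + 1 :=
    fun i _ => by
      rw [card_image_of_injective _ fun a b h => congrArg Prod.fst h, card_range]
  have hdisj : (range (d / 2 + 1) : Set ℕ).PairwiseDisjoint
      fun i => (range (d % 2 + 2 * i + 1)).image fun s => (s, d / 2 - i) := by
    intro i hi j hj hij
    simp only [mem_coe, mem_range] at hi hj
    simp only [Function.onFun, disjoint_left, mem_image]
    rintro _ ⟨s, -, rfl⟩ ⟨t, -, h⟩
    simp only [Prod.mk.injEq] at h
    omega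
  rw [triangle, card_biUnion hdisj, sum_congr rfl hrows, sum_range_add_two_mul_add_one,
    quarterSquare_eq]
  congr 2
  omega

lemma ncard_setOf_add_two_mul_le (d : ℕ) :
    {p : ℕ × ℕ | p.1 + 2 * p.2 ≤ d}.ncard = quarterSquare d := by
  rw [← coe_triangle, Set.ncard_coe_finset, card_triangle]

lemma ncard_setOf_add_two_mul_le_real {L : ℝ} (hL : 0 ≤ L) :
    {p : ℕ × ℕ | (p.1 : ℝ) + 2 * p.2 ≤ L}.ncard = quarterSquare ⌊L⌋₊ := by
  rw [← ncard_setOf_add_two_mul_le]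
  congr with p
  rw [Nat.le_floor_iff hL]
  push_cast
  rfl

theorem echSeq_one_two {k : ℕ} (hk : 0 < k) :
    echSeq 1 2 k = (sInf {d : ℕ | k ≤ quarterSquare d} : ℕ) := by
  have hex : ∃ d, k ≤ quarterSquare d :=
    ⟨k, le_of_lt (by simpa using succ_mul_succ_le_quarterSquare k 0)⟩
  suffices {L : ℝ | k ≤ {p : ℕ × ℕ | 1 * (p.1 : ℝ) + 2 * p.2 ≤ L}.ncard} =
      Set.Ici ((sInf {d : ℕ | k ≤ quarterSquare d} : ℕ) : ℝ) by
    rw [echSeq, this, csInf_Ici]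
  ext L
  simp only [one_mul, Set.mem_ofPred_eq, Set.mem_Ici]
  rcases lt_or_ge L 0 with hL | hL
  · have hempty : {p : ℕ × ℕ | (p.1 : ℝ) + 2 * p.2 ≤ L} = ∅ :=
      Set.eq_empty_of_forall_notMem fun p hp => hL.not_ge (le_trans (by positivity) hp)
    simp only [hempty, Set.ncard_empty, Nat.le_zero, hk.ne', false_iff, not_le]
    exact hL.trans_le (Nat.cast_nonneg _)
  · rw [ncard_setOf_add_two_mul_le_real hL,
      ← Nat.sInf_le_iff_of_monotone quarterSquare_mono hex, Nat.le_floor_iff hL]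

end PolydiskEllipsoid

open PolydiskEllipsoid in
/-- The polydisk `P(1,1)` and the ellipsoid `E(1,2)` have the same ECH
capacities: for every `k ∈ ℕ`,
`min { m + n | (m+1)(n+1) ≥ k+1 } = (1,2)_{k+1}`. -/
theorem polydisk_ellipsoid_same_capacities (k : ℕ) :
    ((sInf {s : ℕ | ∃ m n : ℕ, s = m + n ∧ k + 1 ≤ (m + 1) * (n + 1)} : ℕ) : ℝ) =
      echSeq 1 2 (k + 1) := by
  rw [setOf_exists_add_eq_and_le_succ_mul_succ, echSeq_one_two k.succ_pos]
end

section
/- Let a, b > 0 be real numbers, and for each nonnegative integer k set p_k := min { a·m + b·n | (m,n) ∈ ℕ×ℕ, (m+1)(n+1) ≥ k+1 }. Then lim_{k→∞} p_k² / k = 4ab. (This verifies the volume conjecture for the polydisk P(a,b): the k-th ECH capacity c_k(P(a,b)) equals p_k and lim_{k→∞} c_k(P(a,b))²/k = 4·vol(P(a,b)) = 4ab.) -/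
/-!
The constraint `(m + 1)(n + 1) ≥ k + 1` is, up to an error of one in each factor, the hyperbola
`m n = k`, on which AM-GM gives `a m + b n ≥ 2 √(a b k)`, with equality at `a m = b n = √(a b k)`.
Rounding that real minimiser up to integers costs at most `a + b`, so `p_k = 2 √(a b k) + O(1)`
and hence `p_k² / k → 4 a b`.
-/

open Filter Topology

noncomputable def polydiskCapacity (a b : ℝ) (k : ℕ) : ℝ :=
  sInf {x : ℝ | ∃ m n : ℕ, x = a * m + b * n ∧ k + 1 ≤ (m + 1) * (n + 1)}

lemma two_sqrt_mul_le_add_of_le_mul {a b x y t : ℝ} (ha : 0 ≤ a) (hb : 0 ≤ b)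
    (hx : 0 ≤ x) (hy : 0 ≤ y) (ht : t ≤ x * y) :
    2 * √(a * b * t) ≤ a * x + b * y := by
  have hxy : a * b * t ≤ ((a * x + b * y) / 2) ^ 2 := by
    nlinarith [sq_nonneg (a * x - b * y), mul_nonneg ha hb]
  linarith [Real.sqrt_le_iff.2 ⟨by positivity, hxy⟩]

lemma exists_nat_le_mul_and_add_le {a b t : ℝ} (ha : 0 < a) (hb : 0 < b) (ht : 0 ≤ t) :
    ∃ m n : ℕ, t ≤ m * n ∧ a * m + b * n ≤ 2 * √(a * b * t) + a + b := by
  set r := √(a * b * t)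
  have hr : 0 ≤ r := Real.sqrt_nonneg _
  have hxy : r / a * (r / b) = t := by
    rw [div_mul_div_comm, ← sq, Real.sq_sqrt (by positivity)]
    field_simp
  refine ⟨⌈r / a⌉₊, ⌈r / b⌉₊, ?_, ?_⟩
  · rw [← hxy]
    exact mul_le_mul (Nat.le_ceil _) (Nat.le_ceil _) (by positivity) (by positivity)
  · have hm := Nat.ceil_lt_add_one (div_nonneg hr ha.le)
    have hn := Nat.ceil_lt_add_one (div_nonneg hr hb.le)
    calc a * ⌈r / a⌉₊ + b * ⌈r / b⌉₊ ≤ a * (r / a + 1) + b * (r / b + 1) := by gcongr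
      _ = 2 * r + a + b := by field_simp; ring

section polydiskCapacity

variable {a b : ℝ}

lemma polydiskCapacity_set_nonempty (k : ℕ) :
    {x : ℝ | ∃ m n : ℕ, x = a * m + b * n ∧ k + 1 ≤ (m + 1) * (n + 1)}.Nonempty :=
  ⟨a * k + b * 0, k, 0, by norm_num, by simp⟩

lemma polydiskCapacity_set_bddBelow (ha : 0 ≤ a) (hb : 0 ≤ b) (k : ℕ) :
    BddBelow {x : ℝ | ∃ m n : ℕ, x = a * m + b * n ∧ k + 1 ≤ (m + 1) * (n + 1)} := by
  refine ⟨0, ?_⟩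
  rintro x ⟨m, n, rfl, -⟩
  positivity

lemma two_sqrt_sub_le_polydiskCapacity (ha : 0 ≤ a) (hb : 0 ≤ b) (k : ℕ) :
    2 * √(a * b * k) - (a + b) ≤ polydiskCapacity a b k := by
  refine le_csInf (polydiskCapacity_set_nonempty k) ?_
  rintro x ⟨m, n, rfl, hmn⟩
  have hk : (k : ℝ) ≤ (m + 1) * (n + 1) := by exact_mod_cast (Nat.le_succ k).trans hmn
  linarith [two_sqrt_mul_le_add_of_le_mul ha hb (by positivity) (by positivity) hk]

lemma polydiskCapacity_le_two_sqrt_add (ha : 0 < a) (hb : 0 < b) (k : ℕ) :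
    polydiskCapacity a b k ≤ 2 * √(a * b * k) + (a + b) := by
  obtain ⟨m, n, hk, hmn⟩ := exists_nat_le_mul_and_add_le ha hb (Nat.cast_nonneg k)
  have hk : k + 1 ≤ (m + 1) * (n + 1) := by
    have : k ≤ m * n := by exact_mod_cast hk
    nlinarith
  exact (csInf_le (polydiskCapacity_set_bddBelow ha.le hb.le k) ⟨m, n, rfl, hk⟩).trans
    (by linarith)

lemma abs_polydiskCapacity_sub_le (ha : 0 < a) (hb : 0 < b) (k : ℕ) :
    |polydiskCapacity a b k - 2 * √(a * b) * √k| ≤ a + b := by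
  rw [mul_assoc, ← Real.sqrt_mul (by positivity), abs_sub_le_iff]
  constructor
  · linarith [polydiskCapacity_le_two_sqrt_add ha hb k]
  · linarith [two_sqrt_sub_le_polydiskCapacity ha.le hb.le k]

end polydiskCapacity

lemma tendsto_div_sqrt_of_abs_sub_le {f : ℕ → ℝ} {c C : ℝ}
    (hf : ∀ k, |f k - c * √k| ≤ C) :
    Tendsto (fun k : ℕ => f k / √k) atTop (𝓝 c) := by
  have hsqrt : Tendsto (fun k : ℕ => √(k : ℝ)) atTop atTop :=
    Real.tendsto_sqrt_atTop.comp tendsto_natCast_atTop_atTop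
  rw [tendsto_iff_norm_sub_tendsto_zero]
  refine squeeze_zero' (Eventually.of_forall fun _ => norm_nonneg _) ?_
    ((tendsto_const_nhds (x := C)).div_atTop hsqrt)
  filter_upwards [eventually_ge_atTop 1] with k hk
  have hk : 0 < √(k : ℝ) := Real.sqrt_pos.2 (by exact_mod_cast hk)
  rw [Real.norm_eq_abs, div_sub' hk.ne', mul_comm _ c, abs_div, abs_of_pos hk]
  exact div_le_div_of_nonneg_right (hf k) hk.le

lemma tendsto_sq_div_of_abs_sub_le {f : ℕ → ℝ} {c C : ℝ}
    (hf : ∀ k, |f k - c * √k| ≤ C) :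
    Tendsto (fun k : ℕ => f k ^ 2 / k) atTop (𝓝 (c ^ 2)) := by
  refine ((tendsto_div_sqrt_of_abs_sub_le hf).pow 2).congr fun k => ?_
  rw [div_pow, Real.sq_sqrt (Nat.cast_nonneg k)]

/-- The volume conjecture for the polydisk `P(a,b)`: with
`p_k = min { a·m + b·n | (m+1)(n+1) ≥ k+1 }` (the `k`-th ECH capacity of
`P(a,b)`), we have `lim_{k→∞} p_k² / k = 4ab`. -/
theorem polydisk_volume (a b : ℝ) (ha : 0 < a) (hb : 0 < b)
    (p : ℕ → ℝ)
    (hp : ∀ k : ℕ, p k =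
      sInf {x : ℝ | ∃ m n : ℕ, x = a * m + b * n ∧ k + 1 ≤ (m + 1) * (n + 1)}) :
    Tendsto (fun k : ℕ => (p k) ^ 2 / k) atTop (nhds (4 * a * b)) := by
  obtain rfl : p = polydiskCapacity a b := funext hp
  convert tendsto_sq_div_of_abs_sub_le (abs_polydiskCapacity_sub_le ha hb) using 2
  rw [mul_pow, Real.sq_sqrt (by positivity)]
  ring
end

section
/- For every real number a with 1 ≤ a ≤ 3, min { a·m + n | (m,n) ∈ ℕ×ℕ, (m+1)(n+1) ≥ 28 } = 3a + 6. (This is the computation g_6(a) = (3a+6)/6 for 1 ≤ a ≤ 3, which yields the lower bound g(a) ≥ 1 + a/2 for 2 ≤ a ≤ 3 on the polydisk-into-ball embedding problem.) -/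
/-!
The value `a m + n - (3a + 6)` is affine in `a`, so on `1 ≤ a ≤ 3` it is a convex combination
of its values at `a = 1` and `a = 3`, namely `m + n - 9` and `3m + n - 15`. Both are nonnegative
by AM-GM: `(m + n + 2)² ≥ 4 · 28 > 10²` and `(3m + n + 4)² ≥ 4 · 3 · 28 > 18²`.
The bound is attained at `(m, n) = (3, 6)`.
-/

theorem Nat.lt_add_of_sq_lt_four_mul {s x y : ℕ} (h : s ^ 2 < 4 * (x * y)) : s < x + y := by
  refine lt_of_pow_lt_pow_left₀ 2 (Nat.zero_le _) (h.trans_le ?_)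
  simpa only [mul_assoc] using four_mul_le_sq_add x y

theorem nine_le_add_of_twentyEight_le_mul {m n : ℕ} (h : 28 ≤ (m + 1) * (n + 1)) :
    9 ≤ m + n := by
  have := Nat.lt_add_of_sq_lt_four_mul (s := 10) (x := m + 1) (y := n + 1) (by omega)
  omega

theorem fifteen_le_three_mul_add_of_twentyEight_le_mul {m n : ℕ} (h : 28 ≤ (m + 1) * (n + 1)) :
    15 ≤ 3 * m + n := by
  have := Nat.lt_add_of_sq_lt_four_mul (s := 18) (x := 3 * (m + 1)) (y := n + 1)
    (by rw [mul_assoc]; omega)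
  omega

theorem three_mul_add_six_le_mul_add {a : ℝ} (ha1 : 1 ≤ a) (ha3 : a ≤ 3) {m n : ℕ}
    (h : 28 ≤ (m + 1) * (n + 1)) : 3 * a + 6 ≤ a * m + n := by
  have h₁ : (9 : ℝ) ≤ m + n := by exact_mod_cast nine_le_add_of_twentyEight_le_mul h
  have h₃ : (15 : ℝ) ≤ 3 * m + n := by
    exact_mod_cast fifteen_le_three_mul_add_of_twentyEight_le_mul h
  have hcomb : 0 ≤ (3 - a) / 2 * (m + n - 9) + (a - 1) / 2 * (3 * m + n - 15) :=
    add_nonneg (mul_nonneg (by linarith) (by linarith)) (mul_nonneg (by linarith) (by linarith))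
  calc 3 * a + 6
      ≤ 3 * a + 6 + ((3 - a) / 2 * (m + n - 9) + (a - 1) / 2 * (3 * m + n - 15)) := by linarith
    _ = a * m + n := by ring

/-- The computation `g_6(a) = (3a+6)/6` for `1 ≤ a ≤ 3`:
`min { a·m + n | (m,n) ∈ ℕ×ℕ, (m+1)(n+1) ≥ 28 } = 3a + 6`. -/
theorem g_six_low (a : ℝ) (ha1 : 1 ≤ a) (ha3 : a ≤ 3) :
    sInf {x : ℝ | ∃ m n : ℕ, x = a * m + n ∧ 28 ≤ (m + 1) * (n + 1)} = 3 * a + 6 := by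
  refine IsLeast.csInf_eq ⟨⟨3, 6, by push_cast; ring, by norm_num⟩, ?_⟩
  rintro x ⟨m, n, rfl, h⟩
  exact three_mul_add_six_le_mul_add ha1 ha3 h
end

section
/- For every real number a with 3 ≤ a ≤ 4, min { a·m + n | (m,n) ∈ ℕ×ℕ, (m+1)(n+1) ≥ 28 } = 2a + 9. (This is the computation g_6(a) = (2a+9)/6 for 3 ≤ a ≤ 4, which yields the lower bound g(a) ≥ 3/2 + a/3 for 3 ≤ a ≤ 4 on the polydisk-into-ball embedding problem.) -/
/-!
For fixed `(m, n)` the difference `a * m + n - (2 * a + 9)` is affine in `a`, so it is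
nonnegative on `[3, 4]` once it is at the endpoints, i.e. once `15 ≤ 3 * m + n` and
`17 ≤ 4 * m + n`. These follow from `28 ≤ (m + 1) * (n + 1)` by checking `m ≤ 5` one by one
(for larger `m` they are immediate), and `(m, n) = (2, 9)` attains `2 * a + 9`.
-/

theorem endpoint_bounds_of_le_mul {m n : ℕ} (h : 28 ≤ (m + 1) * (n + 1)) :
    15 ≤ 3 * m + n ∧ 17 ≤ 4 * m + n := by
  rcases le_or_gt m 5 with hm | hm
  · interval_cases m <;> omega
  · omega

theorem two_mul_add_nine_le {a : ℝ} (ha3 : 3 ≤ a) (ha4 : a ≤ 4) {m n : ℕ}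
    (h : 28 ≤ (m + 1) * (n + 1)) : 2 * a + 9 ≤ a * m + n := by
  obtain ⟨h3, h4⟩ := endpoint_bounds_of_le_mul h
  have h3' : (15 : ℝ) ≤ 3 * m + n := by exact_mod_cast h3
  have h4' : (17 : ℝ) ≤ 4 * m + n := by exact_mod_cast h4
  calc 2 * a + 9
      ≤ 2 * a + 9 + ((4 - a) * (3 * m + n - 15) + (a - 3) * (4 * m + n - 17)) := by
        have := mul_nonneg (sub_nonneg.2 ha4) (sub_nonneg.2 h3')
        have := mul_nonneg (sub_nonneg.2 ha3) (sub_nonneg.2 h4')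
        linarith
    _ = a * m + n := by ring

/-- The computation `g_6(a) = (2a+9)/6` for `3 ≤ a ≤ 4`:
`min { a·m + n | (m,n) ∈ ℕ×ℕ, (m+1)(n+1) ≥ 28 } = 2a + 9`. -/
theorem g_six_high (a : ℝ) (ha3 : 3 ≤ a) (ha4 : a ≤ 4) :
    sInf {x : ℝ | ∃ m n : ℕ, x = a * m + n ∧ 28 ≤ (m + 1) * (n + 1)} = 2 * a + 9 := by
  refine IsLeast.csInf_eq ⟨⟨2, 9, by push_cast; ring, by norm_num⟩, ?_⟩
  rintro x ⟨m, n, rfl, h⟩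
  exact two_mul_add_nine_le ha3 ha4 h
end

section
/- For every real number a > 0, sup_{d ≥ 1} (1/d) · min { a·m + n | (m,n) ∈ ℕ×ℕ, 2(m+1)(n+1) ≥ (d+1)(d+2) } ≥ √(2a). (This says that the ECH obstruction to embedding the polydisk P(a,1) into a ball is always at least as strong as the volume obstruction.) -/
/-!
If `2(m+1)(n+1) ≥ (d+1)(d+2) > d²`, then AM-GM gives
`a(m+1) + (n+1) ≥ 2√(a(m+1)(n+1)) ≥ √(2a)·d`, so every element of the set is at least
`√(2a)·d - (a+1)`. Dividing by `d`, the quotient is at least `√(2a) - (a+1)/d`, which exceeds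
`√(2a) - ε` once `d > (a+1)/ε`.
-/

theorem Real.sqrt_two_mul_mul_le_mul_add {a d x y : ℝ} (ha : 0 ≤ a) (hx : 0 ≤ x) (hy : 0 ≤ y)
    (h : d ^ 2 ≤ 2 * (x * y)) :
    √(2 * a) * d ≤ a * x + y := by
  have hsq : (√(2 * a) * d) ^ 2 ≤ (a * x + y) ^ 2 :=
    calc (√(2 * a) * d) ^ 2 = 2 * a * d ^ 2 := by rw [mul_pow, Real.sq_sqrt (by positivity)]
      _ ≤ 4 * (a * x) * y := by nlinarith
      _ ≤ (a * x + y) ^ 2 := four_mul_le_sq_add _ _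
  exact (le_abs_self _).trans (abs_le_of_sq_le_sq hsq (by positivity))

theorem sqrt_two_mul_mul_sub_le_of_le {a : ℝ} (ha : 0 ≤ a) {d m n : ℕ}
    (h : (d + 1) * (d + 2) ≤ 2 * ((m + 1) * (n + 1))) :
    √(2 * a) * d - (a + 1) ≤ a * m + n := by
  have hcast : ((d : ℝ) + 1) * (d + 2) ≤ 2 * ((m + 1) * (n + 1)) := by exact_mod_cast h
  have hd : (d : ℝ) ^ 2 ≤ 2 * ((m + 1) * (n + 1)) := by nlinarith
  linarith [Real.sqrt_two_mul_mul_le_mul_add ha (by positivity) (by positivity) hd]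

theorem sqrt_two_mul_mul_sub_le_csInf {a : ℝ} (ha : 0 ≤ a) (d : ℕ) :
    √(2 * a) * d - (a + 1) ≤
      sInf {x : ℝ | ∃ m n : ℕ, x = a * m + n ∧ (d + 1) * (d + 2) ≤ 2 * ((m + 1) * (n + 1))} := by
  refine le_csInf ⟨a * (0 : ℕ) + ((d + 1) * (d + 2) : ℕ), 0, _, rfl, by nlinarith⟩ ?_
  rintro _ ⟨m, n, rfl, h⟩
  exact sqrt_two_mul_mul_sub_le_of_le ha h

/-- The ECH obstruction to embedding the polydisk `P(a,1)` into a ball is at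
least as strong as the volume obstruction:
`sup_{d ≥ 1} (1/d) · min { a·m + n | 2(m+1)(n+1) ≥ (d+1)(d+2) } ≥ √(2a)`,
read as: for every `ε > 0` there exists `d ≥ 1` with
`(1/d) · min{…} > √(2a) − ε`. -/
theorem polydisk_ball_volume_bound (a : ℝ) (ha : 0 < a) :
    ∀ ε : ℝ, 0 < ε → ∃ d : ℕ, 1 ≤ d ∧
      Real.sqrt (2 * a) - ε <
        (1 / (d : ℝ)) *
          sInf {x : ℝ | ∃ m n : ℕ, x = a * m + n ∧
            (d + 1) * (d + 2) ≤ 2 * ((m + 1) * (n + 1))} := by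
  intro ε hε
  obtain ⟨d, hd⟩ := exists_nat_gt ((a + 1) / ε)
  have hd_pos : (0 : ℝ) < d := (by positivity : 0 < (a + 1) / ε).trans hd
  refine ⟨d, (by exact_mod_cast hd_pos : 0 < d), ?_⟩
  calc √(2 * a) - ε < √(2 * a) - (a + 1) / d := by
        have : (a + 1) / d < ε := by rw [div_lt_iff₀ hd_pos]; rwa [div_lt_iff₀ hε, mul_comm] at hd
        linarith
    _ = 1 / d * (√(2 * a) * d - (a + 1)) := by field_simp
    _ ≤ 1 / d * sInf _ := by gcongr; exact sqrt_two_mul_mul_sub_le_csInf ha.le d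
end

section
/- Let n be a positive integer and let a_1, …, a_n be positive real numbers. Suppose that for every tuple (d_1, …, d_n, d) of nonnegative integers, not all zero, satisfying Σ_{i=1}^n (d_i² + d_i) ≤ d² + 3d, one has Σ_{i=1}^n d_i·a_i < d. Then Σ_{i=1}^n a_i² ≤ 1. (This says that the ECH ball-packing inequalities imply the volume constraint: if the packing inequalities hold for a disjoint union of balls B(a_i) inside B(1), then the total volume of the balls B(a_i) is at most that of B(1).) -/
/-!
If `S = ∑ aᵢ² > 1`, pick `r` with `√S < r < S` and put `dᵢ = ⌊d aᵢ / r⌋` for a large integer `d`.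
Then `∑ (dᵢ² + dᵢ) ≤ (d/r)² S + (d/r) ∑ aᵢ`, which is at most `d²` for large `d` because `S < r²`,
while `∑ dᵢ aᵢ ≥ (d/r) S - ∑ aᵢ`, which is at least `d` for large `d` because `r < S`.
So this tuple satisfies the index constraint but violates the packing inequality.
-/

open Finset Filter

theorem exists_nat_scale_of_one_lt {S A : ℝ} (hS : 1 < S) (hA : 0 ≤ A) :
    ∃ (d : ℕ) (t : ℝ), 0 < d ∧ 0 ≤ t ∧ t ^ 2 * S + t * A ≤ d ^ 2 ∧ (d : ℝ) ≤ t * S - A := by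
  obtain ⟨r, hSr, hrS⟩ := exists_between (Real.sqrt_lt_self_iff.2 hS)
  have hr : 0 < r := (Real.sqrt_nonneg S).trans_lt hSr
  have hSr2 : S < r ^ 2 := (Real.sqrt_lt' hr).1 hSr
  have eventually_ge {c : ℝ} (hc : 0 < c) : ∀ᶠ d : ℕ in atTop, A * r ≤ d * c :=
    (tendsto_natCast_atTop_atTop.atTop_mul_const hc).eventually_ge_atTop _
  obtain ⟨d, ⟨hquad, hlin⟩, hd⟩ := ((eventually_ge (sub_pos.2 hSr2)).and
    (eventually_ge (sub_pos.2 hrS)) |>.and (eventually_gt_atTop 0)).exists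
  refine ⟨d, d / r, hd, by positivity, ?_, ?_⟩
  · rw [show (d / r) ^ 2 * S + d / r * A = (d ^ 2 * S + d * (A * r)) / r ^ 2 by field_simp,
      div_le_iff₀ (by positivity)]
    nlinarith
  · rw [show d / r * S - A = (d * S - A * r) / r by field_simp, le_div_iff₀ hr]
    nlinarith

theorem exists_packing_violation {ι : Type*} [Fintype ι] {a : ι → ℝ} (ha : ∀ i, 0 ≤ a i)
    (hS : 1 < ∑ i, a i ^ 2) :
    ∃ (m : ι → ℕ) (d : ℕ), d ≠ 0 ∧ ∑ i, (m i ^ 2 + m i) ≤ d ^ 2 + 3 * d ∧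
      (d : ℝ) ≤ ∑ i, (m i : ℝ) * a i := by
  obtain ⟨d, t, hd, ht, hquad, hlin⟩ := exists_nat_scale_of_one_lt hS (sum_nonneg fun i _ => ha i)
  refine ⟨fun i => ⌊t * a i⌋₊, d, hd.ne', ?_, ?_⟩
  · have hcast : (∑ i, (⌊t * a i⌋₊ ^ 2 + ⌊t * a i⌋₊ : ℕ) : ℝ) ≤ (d ^ 2 + 3 * d : ℕ) := calc
        _ = ∑ i, ((⌊t * a i⌋₊ : ℝ) ^ 2 + ⌊t * a i⌋₊) := by push_cast; rfl
        _ ≤ ∑ i, ((t * a i) ^ 2 + t * a i) := sum_le_sum fun i _ => by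
          have := Nat.floor_le (mul_nonneg ht (ha i))
          gcongr
        _ = t ^ 2 * ∑ i, a i ^ 2 + t * ∑ i, a i := by
          simp only [sum_add_distrib, mul_sum, mul_pow]
        _ ≤ (d ^ 2 + 3 * d : ℕ) := by push_cast; linarith [(Nat.cast_nonneg d : (0 : ℝ) ≤ d)]
    exact_mod_cast hcast
  · calc (d : ℝ) ≤ t * ∑ i, a i ^ 2 - ∑ i, a i := hlin
      _ = ∑ i, (t * a i - 1) * a i := by
        simp only [mul_sum, ← sum_sub_distrib]
        exact sum_congr rfl fun i _ => by ring
      _ ≤ ∑ i, (⌊t * a i⌋₊ : ℝ) * a i := sum_le_sum fun i _ =>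
        mul_le_mul_of_nonneg_right (Nat.sub_one_lt_floor _).le (ha i)

theorem packing_implies_volume_general (n : ℕ) (a : Fin n → ℝ)
    (ha : ∀ i, 0 < a i)
    (hpack : ∀ (d' : Fin n → ℕ) (d : ℕ), ¬(d = 0 ∧ ∀ i, d' i = 0) →
      (∑ i, ((d' i) ^ 2 + d' i)) ≤ d ^ 2 + 3 * d →
      (∑ i, (d' i : ℝ) * a i) < d) :
    (∑ i, (a i) ^ 2) ≤ 1 := by
  by_contra! hS
  obtain ⟨m, d, hd, hindex, hge⟩ := exists_packing_violation (fun i => (ha i).le) hS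
  exact (hpack m d (fun h => hd h.1) hindex).not_ge hge

/-- The ECH ball-packing inequalities imply the volume constraint: if for every
tuple `(d_1,…,d_n,d)` of nonnegative integers, not all zero, with
`Σ (d_i² + d_i) ≤ d² + 3d`, one has `Σ d_i·a_i < d`, then `Σ a_i² ≤ 1`. -/
theorem packing_implies_volume (n : ℕ) (hn : 0 < n) (a : Fin n → ℝ)
    (ha : ∀ i, 0 < a i)
    (hpack : ∀ (d' : Fin n → ℕ) (d : ℕ), ¬(d = 0 ∧ ∀ i, d' i = 0) →
      (∑ i, ((d' i) ^ 2 + d' i)) ≤ d ^ 2 + 3 * d →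
      (∑ i, (d' i : ℝ) * a i) < d) :
    (∑ i, (a i) ^ 2) ≤ 1 :=
  packing_implies_volume_general n a ha hpack
end

section
/- Let n be a positive integer and let v_1, …, v_n be nonnegative real numbers. For each positive integer k define M(k) := max { Σ_{i=1}^n √(k_i · v_i) | (k_1,…,k_n) ∈ ℕⁿ, Σ_{i=1}^n k_i = k }. Then lim_{k→∞} M(k)/√k = √(Σ_{i=1}^n v_i). (This is the computation showing that the volume conjecture for ECH capacities is preserved under disjoint unions.) -/
/-!
With `V = ∑ vᵢ`, Cauchy–Schwarz gives `∑ √(kᵢ vᵢ) ≤ √(∑ kᵢ) √V = √k √V`. Conversely, the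
proportional allocation `kᵢ = ⌊k vᵢ / V⌋₊` (topped up to total `k` in one coordinate) attains
`∑ √(k vᵢ / V · vᵢ) = √k √V` up to rounding, and rounding costs at most `√vᵢ` in the `i`-th
term; for `V = 0` the convention `x / 0 = 0` keeps this valid without a case split. Hence
`√k √V - ∑ √vᵢ ≤ M(k) ≤ √k √V`, and dividing by `√k` squeezes the limit.
-/

open Filter Topology

namespace Real

lemma sqrt_add_le_add_sqrt {x y : ℝ} (hx : 0 ≤ x) (hy : 0 ≤ y) : √(x + y) ≤ √x + √y := by
  rw [sqrt_le_left (by positivity)]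
  nlinarith [sq_sqrt hx, sq_sqrt hy, sqrt_nonneg x, sqrt_nonneg y]

lemma sqrt_mul_le_sqrt_floor_mul_add (x : ℝ) {a : ℝ} (ha : 0 ≤ a) :
    √(x * a) ≤ √(⌊x⌋₊ * a) + √a := by
  have hfloor : x * a ≤ ⌊x⌋₊ * a + a := by
    nlinarith [(Nat.lt_floor_add_one x).le]
  exact (sqrt_le_sqrt hfloor).trans (sqrt_add_le_add_sqrt (by positivity) ha)

end Real

section Allocation

variable {ι : Type*} [Fintype ι] {v : ι → ℝ}

lemma sum_sqrt_natCast_mul_le (hv : ∀ i, 0 ≤ v i) (κ : ι → ℕ) :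
    ∑ i, √(κ i * v i) ≤ √(∑ i, κ i : ℕ) * √(∑ i, v i) := by
  have hsplit (i : ι) : √(κ i * v i) = √(κ i) * √(v i) := Real.sqrt_mul (Nat.cast_nonneg _) _
  simp only [hsplit, Nat.cast_sum]
  exact Real.sum_sqrt_mul_sqrt_le _ (fun i => Nat.cast_nonneg _) hv

lemma sum_sqrt_proportional (hv : ∀ i, 0 ≤ v i) (k : ℝ) (hk : 0 ≤ k) :
    ∑ i, √(k * v i / (∑ j, v j) * v i) = √k * √(∑ i, v i) := by
  set V := ∑ j, v j
  have hterm (i : ι) : √(k * v i / V * v i) = √(k / V) * v i := by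
    rw [show k * v i / V * v i = k / V * (v i * v i) by ring,
      Real.sqrt_mul (div_nonneg hk (Finset.sum_nonneg fun j _ => hv j)),
      Real.sqrt_mul_self (hv i)]
  rw [Finset.sum_congr rfl fun i _ => hterm i, ← Finset.mul_sum, Real.sqrt_div hk,
    div_mul_eq_mul_div, mul_div_assoc, Real.div_sqrt]

lemma sum_floor_proportional_le (hv : ∀ i, 0 ≤ v i) (k : ℕ) :
    ∑ i, ⌊k * v i / (∑ j, v j)⌋₊ ≤ k := by
  set V := ∑ j, v j
  have hV : 0 ≤ V := Finset.sum_nonneg fun j _ => hv j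
  suffices (∑ i, ⌊k * v i / V⌋₊ : ℕ) ≤ (k : ℝ) by exact_mod_cast this
  calc (∑ i, ⌊k * v i / V⌋₊ : ℕ)
      ≤ ∑ i, k * v i / V := by
        push_cast
        exact Finset.sum_le_sum fun i _ => Nat.floor_le (by have := hv i; positivity)
    _ = k * V / V := by rw [← Finset.sum_div, ← Finset.mul_sum]
    _ ≤ k := by
        rcases hV.eq_or_lt with hV0 | hVpos
        · simp [← hV0]
        · rw [mul_div_cancel_right₀ _ hVpos.ne']

lemma exists_le_sum_eq [Nonempty ι] [DecidableEq ι] {κ : ι → ℕ} {k : ℕ} (hκ : ∑ i, κ i ≤ k) :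
    ∃ κ' : ι → ℕ, κ ≤ κ' ∧ ∑ i, κ' i = k := by
  obtain ⟨i₀⟩ := ‹Nonempty ι›
  refine ⟨κ + Pi.single i₀ (k - ∑ i, κ i), le_add_of_nonneg_right fun _ => Nat.zero_le _, ?_⟩
  simp only [Pi.add_apply, Finset.sum_add_distrib, Finset.sum_pi_single', Finset.mem_univ,
    if_true]
  omega

lemma exists_allocation_sqrt_mul_sub_le [Nonempty ι] (hv : ∀ i, 0 ≤ v i) (k : ℕ) :
    ∃ κ : ι → ℕ, ∑ i, κ i = k ∧
      √k * √(∑ i, v i) - ∑ i, √(v i) ≤ ∑ i, √(κ i * v i) := by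
  classical
  set V := ∑ j, v j
  obtain ⟨κ, hle, hsum⟩ := exists_le_sum_eq (sum_floor_proportional_le hv k)
  refine ⟨κ, hsum, ?_⟩
  calc √k * √V - ∑ i, √(v i)
      = ∑ i, (√(k * v i / V * v i) - √(v i)) := by
        rw [Finset.sum_sub_distrib, sum_sqrt_proportional hv _ k.cast_nonneg]
    _ ≤ ∑ i, √(⌊k * v i / V⌋₊ * v i) := by
        gcongr with i
        linarith [Real.sqrt_mul_le_sqrt_floor_mul_add (k * v i / V) (hv i)]
    _ ≤ ∑ i, √(κ i * v i) := by
        gcongr with i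
        · exact hv i
        · exact hle i

end Allocation

lemma tendsto_div_sqrt_of_sqrt_mul_sub_le_of_le {f : ℕ → ℝ} {a C : ℝ}
    (hlow : ∀ᶠ k : ℕ in atTop, √k * a - C ≤ f k) (hup : ∀ᶠ k : ℕ in atTop, f k ≤ √k * a) :
    Tendsto (fun k => f k / √k) atTop (𝓝 a) := by
  have hsqrt : Tendsto (fun k : ℕ => √k) atTop atTop :=
    Real.tendsto_sqrt_atTop.comp tendsto_natCast_atTop_atTop
  have hlim : Tendsto (fun k : ℕ => a - C / √k) atTop (𝓝 a) := by
    simpa using tendsto_const_nhds.sub (tendsto_const_nhds.div_atTop hsqrt)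
  refine tendsto_of_tendsto_of_tendsto_of_le_of_le' hlim tendsto_const_nhds ?_ ?_
  · filter_upwards [hlow, hsqrt.eventually_gt_atTop 0] with k hk hpos
    rw [le_div_iff₀ hpos, sub_mul, div_mul_cancel₀ _ hpos.ne', mul_comm]
    exact hk
  · filter_upwards [hup, hsqrt.eventually_gt_atTop 0] with k hk hpos
    rw [div_le_iff₀ hpos, mul_comm]
    exact hk

/-- The volume conjecture for ECH capacities is preserved under disjoint
unions: with `M(k) = max { Σ √(k_i v_i) | Σ k_i = k }`, one has
`lim_{k→∞} M(k)/√k = √(Σ v_i)`. -/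
theorem disjoint_union_volume (n : ℕ) (hn : 0 < n) (v : Fin n → ℝ)
    (hv : ∀ i, 0 ≤ v i) (M : ℕ → ℝ)
    (hM : ∀ k : ℕ, 0 < k → M k =
      sSup {x : ℝ | ∃ κ : Fin n → ℕ, (∑ i, κ i) = k ∧
        x = ∑ i, Real.sqrt ((κ i : ℝ) * v i)}) :
    Tendsto (fun k : ℕ => M k / Real.sqrt k) atTop (nhds (Real.sqrt (∑ i, v i))) := by
  have : Nonempty (Fin n) := ⟨⟨0, hn⟩⟩
  have hupper (k : ℕ) : ∀ x ∈ {x : ℝ | ∃ κ : Fin n → ℕ, (∑ i, κ i) = k ∧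
      x = ∑ i, Real.sqrt ((κ i : ℝ) * v i)}, x ≤ √k * √(∑ i, v i) := by
    rintro x ⟨κ, hκ, rfl⟩
    simpa [hκ] using sum_sqrt_natCast_mul_le hv κ
  apply tendsto_div_sqrt_of_sqrt_mul_sub_le_of_le (C := ∑ i, √(v i))
  · filter_upwards [eventually_gt_atTop 0] with k hk
    obtain ⟨κ, hκ, hlow⟩ := exists_allocation_sqrt_mul_sub_le hv k
    rw [hM k hk]
    exact hlow.trans (le_csSup ⟨_, hupper k⟩ ⟨κ, hκ, rfl⟩)
  · filter_upwards [eventually_gt_atTop 0] with k hk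
    rw [hM k hk]
    exact Real.sSup_le (hupper k) (by positivity)
end

section
/- Let K be a field, let V be an infinite-dimensional K-vector space, and let F : ℝ → Submodule(K, V) be a monotone family of subspaces (L ≤ L' implies F(L) ⊆ F(L')) such that ⋃_L F(L) = V, each F(L) is finite-dimensional, and F(L) = 0 for L ≤ 0. Let (σ_k)_{k=1,2,…} be a basis of V such that for every k ≥ 1, sInf { L | σ_k ∈ F(L) } = sInf { L | dim F(L) ≥ k }. Let σ = Σ_j a_j σ_j be a nonzero element of V (finite sum, a_j ∈ K), and let k be the largest index with a_k ≠ 0. Then sInf { L | σ ∈ F(L) } = sInf { L | dim F(L) ≥ k }. (In the ECH setting: if {σ_k} is an action-minimizing basis and σ = Σ a_j σ_j ≠ 0, then c_σ(Y,λ) = c̃_k(Y,λ) where k is the largest index with a_k ≠ 0.) -/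
/-!
If `c̃_k < M`, then every `σ_j` with `j ≤ k` has `c_{σ_j} = c̃_j ≤ c̃_k < M`, so
`σ ∈ span {σ_j | j ≤ k} ≤ F M`; hence `c_σ ≤ c̃_k`. Conversely, if `σ ∈ F L`, induction on
`n ≤ k` shows `dim F L' ≥ n` for every `L' > L`: the induction hypothesis gives `c̃_j ≤ L` for
`j ≤ n`, so `σ_1, …, σ_n ∈ F L'`, and for `n < k` the vector `σ`, whose `σ_k`-coefficient is
nonzero, is independent of them. Hence `c̃_k ≤ c_σ`.
-/

open Module Set

theorem IsUpperSet.mem_of_csInf_lt {S : Set ℝ} (hS : IsUpperSet S) (hne : S.Nonempty) {M : ℝ}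
    (h : sInf S < M) : M ∈ S :=
  let ⟨_, ha, hlt⟩ := exists_lt_of_csInf_lt hne h
  hS hlt.le ha

theorem csInf_le_of_forall_lt_mem {S : Set ℝ} (hS : BddBelow S) {L : ℝ}
    (h : ∀ L', L < L' → L' ∈ S) : sInf S ≤ L :=
  le_of_forall_gt_imp_ge_of_dense fun L' hL' => csInf_le hS (h L' hL')

theorem LinearIndependent.card_le_finrank_of_forall_mem {K V : Type*} [Field K] [AddCommGroup V]
    [Module K V] {W : Submodule K V} [FiniteDimensional K W] {n : ℕ} {v : Fin n → V}
    (hv : LinearIndependent K v) (hmem : ∀ i, v i ∈ W) : n ≤ finrank K W := by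
  simpa [finrank_span_eq_card hv] using
    Submodule.finrank_mono (Submodule.span_le.mpr (range_subset_iff.mpr hmem))

theorem Module.Basis.linearIndependent_snoc_of_repr_ne_zero {ι K V : Type*} [Field K]
    [AddCommGroup V] [Module K V] (b : Basis ι K V) {n : ℕ} {g : Fin n → ι}
    (hg : Function.Injective g) {σ : V} {k : ι} (hk : b.repr σ k ≠ 0) (hgk : ∀ i, g i ≠ k) :
    LinearIndependent K (Fin.snoc (b ∘ g) σ : Fin (n + 1) → V) := by
  refine linearIndependent_finSnoc.mpr ⟨b.linearIndependent.comp g hg, fun hspan => ?_⟩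
  rw [range_comp, b.mem_span_image] at hspan
  obtain ⟨i, hi⟩ := hspan (Finsupp.mem_support_iff.mpr hk)
  exact hgk i hi

section Filtration

variable {K V : Type*} [Field K] [AddCommGroup V] [Module K V] (F : ℝ → Submodule K V)

/-- The paper's `c_v`. -/
noncomputable def entryLevel (v : V) : ℝ := sInf {L : ℝ | v ∈ F L}

/-- The paper's `c̃_n`. -/
noncomputable def rankLevel (n : ℕ) : ℝ := sInf {L : ℝ | n ≤ finrank K (F L)}

variable {F}

theorem isUpperSet_setOf_mem (hmono : Monotone F) (v : V) : IsUpperSet {L : ℝ | v ∈ F L} :=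
  fun _ _ hab hv => hmono hab hv

theorem isUpperSet_setOf_le_finrank (hmono : Monotone F)
    (hfin : ∀ L, FiniteDimensional K (F L)) (n : ℕ) :
    IsUpperSet {L : ℝ | n ≤ finrank K (F L)} :=
  fun _ b hab hn => hn.trans (haveI := hfin b; Submodule.finrank_mono (hmono hab))

theorem bddBelow_setOf_mem (hzero : ∀ L, L ≤ 0 → F L = ⊥) {v : V} (hv : v ≠ 0) :
    BddBelow {L : ℝ | v ∈ F L} :=
  ⟨0, fun L hL => le_of_not_ge fun h => hv (by simpa [hzero L h] using hL)⟩

theorem bddBelow_setOf_le_finrank (hzero : ∀ L, L ≤ 0 → F L = ⊥) {n : ℕ} (hn : 0 < n) :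
    BddBelow {L : ℝ | n ≤ finrank K (F L)} :=
  ⟨0, fun L hL => le_of_not_ge fun h =>
    (hn.trans_le hL).ne' (by rw [hzero L h, finrank_bot])⟩

theorem rankLevel_mono (hzero : ∀ L, L ≤ 0 → F L = ⊥) {m n : ℕ} (hm : 0 < m) (hmn : m ≤ n)
    (hne : {L : ℝ | n ≤ finrank K (F L)}.Nonempty) : rankLevel F m ≤ rankLevel F n :=
  csInf_le_csInf (bddBelow_setOf_le_finrank hzero hm) hne fun _ hL => hmn.trans hL

variable (hmono : Monotone F) (hexh : ∀ v : V, ∃ L, v ∈ F L)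
  {b : Basis ℕ+ K V} (hb : ∀ k : ℕ+, entryLevel F (b k) = rankLevel F k)
include hmono hexh hb

theorem Module.Basis.mem_of_rankLevel_lt {j : ℕ+} {M : ℝ} (h : rankLevel F j < M) : b j ∈ F M :=
  (isUpperSet_setOf_mem hmono (b j)).mem_of_csInf_lt (hexh (b j)) (by rwa [← hb j] at h)

theorem le_finrank_of_mem (hfin : ∀ L, FiniteDimensional K (F L))
    (hzero : ∀ L, L ≤ 0 → F L = ⊥) {σ : V} {k : ℕ+} (hk : b.repr σ k ≠ 0) {L : ℝ}
    (hσ : σ ∈ F L) : ∀ n ≤ (k : ℕ), ∀ L', L < L' → n ≤ finrank K (F L') := by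
  intro n
  induction n with
  | zero => exact fun _ _ _ => Nat.zero_le _
  | succ n ih =>
    intro hnk L' hLL'
    have hbasis : ∀ j : ℕ+, (j : ℕ) ≤ n → b j ∈ F L' := fun j hj =>
      b.mem_of_rankLevel_lt hmono hexh hb <| lt_of_le_of_lt
        (csInf_le_of_forall_lt_mem (bddBelow_setOf_le_finrank hzero j.pos)
          fun L'' hL'' => hj.trans (ih (by omega) L'' hL'')) hLL'
    have hind := b.linearIndependent_snoc_of_repr_ne_zero
      (g := fun i : Fin n => (i : ℕ).succPNat) (Nat.succPNat_injective.comp Fin.val_injective) hk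
      fun i hi => by have := congrArg PNat.val hi; simp at this; omega
    have := hfin L'
    refine hind.card_le_finrank_of_forall_mem (Fin.lastCases ?_ fun i => ?_)
    · simpa using hmono hLL'.le hσ
    · simpa using hbasis (i : ℕ).succPNat (by simp)

theorem mem_of_rankLevel_lt_of_forall_repr_eq_zero (hzero : ∀ L, L ≤ 0 → F L = ⊥) {σ : V} {k : ℕ+}
    (hk' : ∀ j : ℕ+, k < j → b.repr σ j = 0)
    (hne : {L : ℝ | (k : ℕ) ≤ finrank K (F L)}.Nonempty) {M : ℝ} (hM : rankLevel F k < M) :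
    σ ∈ F M := by
  have hspan : σ ∈ Submodule.span K (b '' Iic k) :=
    b.mem_span_image.mpr fun j hj => not_lt.mp fun hkj => Finsupp.mem_support_iff.mp hj (hk' j hkj)
  refine Submodule.span_le.mpr ?_ hspan
  rintro _ ⟨j, hj, rfl⟩
  exact b.mem_of_rankLevel_lt hmono hexh hb
    ((rankLevel_mono hzero j.pos (by exact_mod_cast hj) hne).trans_lt hM)

theorem entryLevel_eq_rankLevel (hfin : ∀ L, FiniteDimensional K (F L))
    (hzero : ∀ L, L ≤ 0 → F L = ⊥) {σ : V} {k : ℕ+} (hk : b.repr σ k ≠ 0)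
    (hk' : ∀ j : ℕ+, k < j → b.repr σ j = 0) : entryLevel F σ = rankLevel F k := by
  have hσ : σ ≠ 0 := fun h => hk (by simp [h])
  obtain ⟨L₀, hL₀⟩ := hexh σ
  have hne : {L : ℝ | (k : ℕ) ≤ finrank K (F L)}.Nonempty :=
    ⟨L₀ + 1, le_finrank_of_mem hmono hexh hb hfin hzero hk hL₀ k le_rfl _ (lt_add_one L₀)⟩
  refine le_antisymm ?_ (le_csInf ⟨L₀, hL₀⟩ fun L hL => ?_)
  · exact csInf_le_of_forall_lt_mem (bddBelow_setOf_mem hzero hσ)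
      fun M hM => mem_of_rankLevel_lt_of_forall_repr_eq_zero hmono hexh hb hzero hk' hne hM
  · exact csInf_le_of_forall_lt_mem (bddBelow_setOf_le_finrank hzero k.pos)
      (le_finrank_of_mem hmono hexh hb hfin hzero hk hL k le_rfl)

end Filtration

theorem action_minimizing_basis_spectrum_general (K : Type*) [Field K] (V : Type*)
    [AddCommGroup V] [Module K V] (F : ℝ → Submodule K V) (hmono : Monotone F)
    (hexh : ∀ v : V, ∃ L : ℝ, v ∈ F L)
    (hfin : ∀ L : ℝ, FiniteDimensional K (F L))
    (hzero : ∀ L : ℝ, L ≤ 0 → F L = ⊥)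
    (b : Module.Basis ℕ+ K V)
    (hb : ∀ k : ℕ+,
      sInf {L : ℝ | b k ∈ F L} =
        sInf {L : ℝ | (k : ℕ) ≤ Module.finrank K (F L)})
    (σ : V) (k : ℕ+)
    (hk : b.repr σ k ≠ 0) (hk' : ∀ j : ℕ+, k < j → b.repr σ j = 0) :
    sInf {L : ℝ | σ ∈ F L} =
      sInf {L : ℝ | (k : ℕ) ≤ Module.finrank K (F L)} :=
  entryLevel_eq_rankLevel hmono hexh hb hfin hzero hk hk'

/-- Lemma on action-minimizing bases, part (b): if `(σ_k)_{k ≥ 1}` is an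
action-minimizing basis of `V` (so `sInf {L | σ_k ∈ F L} = sInf {L | dim F L ≥ k}`
for all `k`), `σ = Σ_j a_j σ_j` is nonzero, and `k` is the largest index with
`a_k ≠ 0`, then `sInf {L | σ ∈ F L} = sInf {L | dim F L ≥ k}`. -/
theorem action_minimizing_basis_spectrum (K : Type*) [Field K] (V : Type*)
    [AddCommGroup V] [Module K V] (hV : ¬ FiniteDimensional K V)
    (F : ℝ → Submodule K V) (hmono : Monotone F)
    (hexh : ∀ v : V, ∃ L : ℝ, v ∈ F L)
    (hfin : ∀ L : ℝ, FiniteDimensional K (F L))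
    (hzero : ∀ L : ℝ, L ≤ 0 → F L = ⊥)
    (b : Module.Basis ℕ+ K V)
    (hb : ∀ k : ℕ+,
      sInf {L : ℝ | b k ∈ F L} =
        sInf {L : ℝ | (k : ℕ) ≤ Module.finrank K (F L)})
    (σ : V) (hσ : σ ≠ 0) (k : ℕ+)
    (hk : b.repr σ k ≠ 0) (hk' : ∀ j : ℕ+, k < j → b.repr σ j = 0) :
    sInf {L : ℝ | σ ∈ F L} =
      sInf {L : ℝ | (k : ℕ) ≤ Module.finrank K (F L)} :=
  action_minimizing_basis_spectrum_general K V F hmono hexh hfin hzero b hb σ k hk hk'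
end
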